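/- Let K ⊆ ℝⁿ be a convex open set containing 0, ψ: ℝⁿ → ℝ ∪ {+∞} convex with ψ(0) < 0 and K ⊆ dom(ψ) ⊆ closure(K), and let p > 0. If functions ψ_ℓ with ψ_ℓ(0) < 0 converge pointwise to ψ on K, then I_p(ψ) ≤ liminf_{ℓ→∞} I_p(ψ_ℓ), where I_p(ψ) = (∫_{ℝⁿ} (ψ*(x))^{-(n+p)} dx)^{-1/p}. -/

import Mathlib

open MeasureTheory Filter
open scoped ENNReal RealInnerProductSpace

noncomputable section

abbrev En (n : ℕ) := EuclideanSpace ℝ (Fin n)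

/-- Legendre transform of an `EReal`-valued function: `ψ*(y) = sup_{x ∈ dom ψ} (⟨x,y⟩ - ψ x)`. -/
def legendre {n : ℕ} (ψ : En n → EReal) (y : En n) : EReal :=
  ⨆ x : {x : En n // ψ x < ⊤}, ((⟪x.1, y⟫ : ℝ) : EReal) - ψ x.1

/-- Convexity for `ℝ ∪ {+∞}`-valued functions. -/
def EConvexOn {n : ℕ} (ψ : En n → EReal) : Prop :=
  ∀ x y : En n, ∀ a b : ℝ, 0 ≤ a → 0 ≤ b → a + b = 1 →
    ψ (a • x + b • y) ≤ (a : EReal) * ψ x + (b : EReal) * ψ y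

/-- `t ^ (-s)` with the conventions `0^(-s) = ∞`, `∞^(-s) = 0` (for `s > 0`). -/
def negPow (t : EReal) (s : ℝ) : ℝ≥0∞ :=
  if t = ⊤ then 0 else if t ≤ 0 then ⊤ else ENNReal.ofReal (t.toReal ^ (-s))

/-- `I_p(ψ) = (∫ (ψ*)^{-(n+p)})^{-1/p} ∈ [0,∞]`. -/
def Ip (n : ℕ) (p : ℝ) (ψ : En n → EReal) : ℝ≥0∞ :=
  (∫⁻ x, negPow (legendre ψ x) ((n : ℝ) + p)) ^ (-(1 : ℝ) / p)

/-!
Since `0 ∈ int K` and `ψ 0 ≤ 0`, convexity gives `ψ (t • x) ≤ t ψ x` along the segment from `0`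
to any `x ∈ dom ψ ⊆ closure K`, which lies in `K` for `t < 1`; so the supremum defining `ψ*` may be
taken over `K` alone, where `ψ` is a pointwise limit. Hence `ψ* ≤ liminf ψ_ℓ*`, and since
`t ↦ t ^ (-(n + p))` is antitone and continuous, `limsup (ψ_ℓ*) ^ (-(n + p)) ≤ (ψ*) ^ (-(n + p))`.
Reverse Fatou applies because eventually `ψ_ℓ 0 < -c < 0` and `ψ_ℓ ≤ M` at the points `± r eᵢ`
of `K`, which forces `ψ_ℓ* y ≥ δ (1 + ‖y‖)`, and `(1 + ‖y‖) ^ (-(n + p))` is integrable on `ℝⁿ`.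
Finally `t ↦ t ^ (-1/p)` is again antitone and continuous.
-/

open Set Topology

lemma ENNReal.antitone_rpow_of_nonpos {z : ℝ} (hz : z ≤ 0) : Antitone fun x : ℝ≥0∞ => x ^ z := by
  intro a b hab
  have hinv : ∀ x : ℝ≥0∞, x ^ z = (x ^ (-z))⁻¹ := fun x => by rw [← ENNReal.rpow_neg, neg_neg]
  simp only [hinv]
  exact ENNReal.inv_le_inv.2 (ENNReal.rpow_le_rpow hab (neg_nonneg.2 hz))

lemma ENNReal.rpow_le_liminf_of_limsup_le {ι : Type*} {F : Filter ι} [F.NeBot] {z : ℝ}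
    (hz : z ≤ 0) {u : ι → ℝ≥0∞} {b : ℝ≥0∞} (h : F.limsup u ≤ b) :
    b ^ z ≤ F.liminf fun i => u i ^ z :=
  (ENNReal.antitone_rpow_of_nonpos hz h).trans_eq
    ((ENNReal.antitone_rpow_of_nonpos hz).map_limsup_of_continuousAt u
      ENNReal.continuous_rpow_const.continuousAt)

lemma EReal.tendsto_coe_sub {α : Type*} {l : Filter α} {f : α → ℝ} {g : α → EReal} {a : ℝ}
    {b : EReal} (hf : Tendsto f l (𝓝 a)) (hg : Tendsto g l (𝓝 b)) :
    Tendsto (fun x => (f x : EReal) - g x) l (𝓝 ((a : EReal) - b)) := by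
  simp only [sub_eq_add_neg]
  have hadd : ContinuousAt (fun q : EReal × EReal => q.1 + q.2) ((a : EReal), -b) :=
    EReal.continuousAt_add (.inl (EReal.coe_ne_top a)) (.inl (EReal.coe_ne_bot a))
  exact hadd.tendsto.comp (((continuous_coe_real_ereal.tendsto a).comp hf).prodMk_nhds
    ((continuous_neg.tendsto b).comp hg))

lemma mul_one_add_le_max {a c M : ℝ} (ha : 0 < a) (hc : 0 < c) (hM : 0 ≤ M) (t : ℝ) :
    a * c / (a + c + M) * (1 + t) ≤ max c (a * t - M) := by
  have hD : 0 < a + c + M := by positivity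
  calc a * c / (a + c + M) * (1 + t)
      = (a + M) / (a + c + M) * c + c / (a + c + M) * (a * t - M) := by field_simp; ring
    _ ≤ (a + M) / (a + c + M) * max c (a * t - M) + c / (a + c + M) * max c (a * t - M) := by
        gcongr
        · exact le_max_left _ _
        · exact le_max_right _ _
    _ = max c (a * t - M) := by field_simp; ring

lemma limsup_lintegral_le_of_eventually_le {α : Type*} [MeasurableSpace α] {μ : Measure α}
    {f : ℕ → α → ℝ≥0∞} (g : α → ℝ≥0∞) (hf : ∀ k, Measurable (f k))
    (h_bound : ∀ᶠ k in atTop, f k ≤ᵐ[μ] g) (h_fin : ∫⁻ a, g a ∂μ ≠ ∞) :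
    atTop.limsup (fun k => ∫⁻ a, f k a ∂μ) ≤ ∫⁻ a, atTop.limsup (fun k => f k a) ∂μ := by
  obtain ⟨N, hN⟩ := eventually_atTop.1 h_bound
  have := limsup_lintegral_le g (fun k => hf (k + N)) (fun k => hN _ (Nat.le_add_left N k)) h_fin
  calc atTop.limsup (fun k => ∫⁻ a, f k a ∂μ)
      = atTop.limsup (fun k => ∫⁻ a, f (k + N) a ∂μ) := (limsup_nat_add _ N).symm
    _ ≤ ∫⁻ a, atTop.limsup (fun k => f (k + N) a) ∂μ := this
    _ = ∫⁻ a, atTop.limsup (fun k => f k a) ∂μ :=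
        lintegral_congr fun a => limsup_nat_add (fun k => f k a) N

lemma negPow_eq_toENNReal_rpow (t : EReal) {s : ℝ} (hs : 0 < s) :
    negPow t s = t.toENNReal ^ (-s) := by
  unfold negPow
  split_ifs with htop hle
  · simp [htop, ENNReal.top_rpow_of_neg (neg_neg_of_pos hs)]
  · rw [EReal.toENNReal_of_nonpos hle, ENNReal.zero_rpow_of_neg (neg_neg_of_pos hs)]
  · rw [EReal.toENNReal_of_ne_top htop,
      ENNReal.ofReal_rpow_of_pos (EReal.toReal_pos (not_le.1 hle) htop)]

lemma negPow_coe {u : ℝ} (hu : 0 < u) (s : ℝ) : negPow u s = ENNReal.ofReal (u ^ (-s)) := by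
  simp [negPow, hu.not_ge]

lemma antitone_negPow {s : ℝ} (hs : 0 < s) : Antitone (negPow · s) := by
  simp only [negPow_eq_toENNReal_rpow _ hs]
  exact (ENNReal.antitone_rpow_of_nonpos (by linarith)).comp_monotone
    fun _ _ => EReal.toENNReal_le_toENNReal

lemma continuous_negPow {s : ℝ} (hs : 0 < s) : Continuous (negPow · s) := by
  simp only [negPow_eq_toENNReal_rpow _ hs]
  exact ENNReal.continuous_rpow_const.comp EReal.continuous_toENNReal

lemma limsup_negPow_le {ι : Type*} {F : Filter ι} [F.NeBot] {s : ℝ} (hs : 0 < s) {u : ι → EReal}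
    {b : EReal} (h : b ≤ F.liminf u) : F.limsup (fun i => negPow (u i) s) ≤ negPow b s :=
  ((antitone_negPow hs).map_liminf_of_continuousAt u
    (continuous_negPow hs).continuousAt).symm.trans_le (antitone_negPow hs h)

section Legendre

variable {n : ℕ}

lemma le_legendre {ψ : En n → EReal} {x : En n} (hx : ψ x < ⊤) (y : En n) :
    ((⟪x, y⟫ : ℝ) : EReal) - ψ x ≤ legendre ψ y :=
  le_iSup (fun x : {x // ψ x < ⊤} => ((⟪x.1, y⟫ : ℝ) : EReal) - ψ x.1) ⟨x, hx⟩

lemma coe_sub_le_legendre {ψ : En n → EReal} {x : En n} {M : ℝ} (hx : ψ x ≤ M) (y : En n) :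
    ((⟪x, y⟫ - M : ℝ) : EReal) ≤ legendre ψ y := by
  rw [EReal.coe_sub]
  exact (EReal.sub_le_sub le_rfl hx).trans (le_legendre (hx.trans_lt (EReal.coe_lt_top M)) y)

lemma measurable_legendre (ψ : En n → EReal) : Measurable (legendre ψ) := by
  refine (lowerSemicontinuous_iSup fun x => Continuous.lowerSemicontinuous ?_).measurable
  exact continuous_iff_continuousAt.2 fun y =>
    EReal.tendsto_coe_sub ((continuous_const.inner continuous_id).tendsto y) tendsto_const_nhds

lemma EConvexOn.apply_smul_le {ψ : En n → EReal} (hconv : EConvexOn ψ) (hψ0 : ψ 0 ≤ 0)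
    (x : En n) {t : ℝ} (ht0 : 0 ≤ t) (ht1 : t ≤ 1) : ψ (t • x) ≤ t * ψ x := by
  have h := hconv x 0 t (1 - t) ht0 (sub_nonneg.2 ht1) (by ring)
  rw [smul_zero, add_zero] at h
  refine h.trans (add_le_of_nonpos_right ?_)
  exact EReal.mul_nonpos_iff.2 (Or.inl ⟨EReal.coe_nonneg.2 (sub_nonneg.2 ht1), hψ0⟩)

lemma legendre_le_of_forall_mem {K : Set (En n)} (hKconv : Convex ℝ K) (h0K : 0 ∈ interior K)
    {ψ : En n → EReal} (hconv : EConvexOn ψ) (hψ0 : ψ 0 ≤ 0)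
    (hdom : {x | ψ x < ⊤} ⊆ closure K) {y : En n} {L : EReal}
    (hL : ∀ z ∈ K, ((⟪z, y⟫ : ℝ) : EReal) - ψ z ≤ L) : legendre ψ y ≤ L := by
  refine iSup_le fun ⟨x, hx⟩ => ?_
  have hsegment : ∀ t ∈ Ioo (0 : ℝ) 1, (t : EReal) * (((⟪x, y⟫ : ℝ) : EReal) - ψ x) ≤ L := by
    rintro t ⟨ht0, ht1⟩
    have hmem : t • x ∈ K := by
      have := hKconv.combo_interior_closure_mem_interior h0K (hdom hx) (sub_pos.2 ht1) ht0.le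
        (by ring)
      simpa using interior_subset this
    calc (t : EReal) * (((⟪x, y⟫ : ℝ) : EReal) - ψ x)
        = ((⟪t • x, y⟫ : ℝ) : EReal) - t * ψ x := by
          rw [EReal.mul_sub_of_nonneg_of_ne_top (EReal.coe_nonneg.2 ht0.le) (EReal.coe_ne_top t),
            real_inner_smul_left, EReal.coe_mul]
      _ ≤ ((⟪t • x, y⟫ : ℝ) : EReal) - ψ (t • x) :=
          EReal.sub_le_sub le_rfl (hconv.apply_smul_le hψ0 x ht0.le ht1.le)
      _ ≤ L := hL _ hmem
  have hlim : Tendsto (fun t : ℝ => (t : EReal) * (((⟪x, y⟫ : ℝ) : EReal) - ψ x)) (𝓝[<] 1)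
      (𝓝 (((⟪x, y⟫ : ℝ) : EReal) - ψ x)) := by
    simpa using EReal.Tendsto.mul
      ((continuous_coe_real_ereal.tendsto 1).mono_left nhdsWithin_le_nhds) tendsto_const_nhds
      (.inl (by simp)) (.inl (by simp)) (.inl (EReal.coe_ne_bot 1)) (.inl (EReal.coe_ne_top 1))
  exact le_of_tendsto hlim (eventually_of_mem (Ioo_mem_nhdsLT one_pos) hsegment)

lemma legendre_le_liminf {K : Set (En n)} (hKconv : Convex ℝ K) (h0K : 0 ∈ interior K)
    {ψ : En n → EReal} (hconv : EConvexOn ψ) (hψ0 : ψ 0 ≤ 0) (hdom₁ : K ⊆ {x | ψ x < ⊤})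
    (hdom₂ : {x | ψ x < ⊤} ⊆ closure K) {ψs : ℕ → En n → EReal}
    (hptwise : ∀ x ∈ K, Tendsto (fun ℓ => ψs ℓ x) atTop (𝓝 (ψ x))) (y : En n) :
    legendre ψ y ≤ atTop.liminf fun ℓ => legendre (ψs ℓ) y := by
  refine legendre_le_of_forall_mem hKconv h0K hconv hψ0 hdom₂ fun z hz => ?_
  have hdomℓ : ∀ᶠ ℓ in atTop, ψs ℓ z < ⊤ := (hptwise z hz).eventually_lt_const (hdom₁ hz)
  calc ((⟪z, y⟫ : ℝ) : EReal) - ψ z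
      = atTop.liminf fun ℓ => ((⟪z, y⟫ : ℝ) : EReal) - ψs ℓ z :=
        (EReal.tendsto_coe_sub tendsto_const_nhds (hptwise z hz)).liminf_eq.symm
    _ ≤ atTop.liminf fun ℓ => legendre (ψs ℓ) y :=
        liminf_le_liminf (hdomℓ.mono fun ℓ hℓ => le_legendre hℓ y)

lemma le_legendre_of_le_on_axes {ι : Type*} [Fintype ι] (b : OrthonormalBasis ι ℝ (En n))
    {φ : En n → EReal} {r c M : ℝ} (hr : 0 ≤ r) (hc : 0 ≤ c) (hM : 0 ≤ M)
    (h0 : φ 0 ≤ ((-c : ℝ) : EReal))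
    (haxes : ∀ i (σ : SignType), φ (((σ : ℝ) * r) • b i) ≤ M) (y : En n) :
    ((max c (r / (√(Fintype.card ι) + 1) * ‖y‖ - M) : ℝ) : EReal) ≤ legendre φ y := by
  have hc_le : (c : EReal) ≤ legendre φ y := by simpa using coe_sub_le_legendre h0 y
  have haxis : ∀ i, ((r * |⟪b i, y⟫| - M : ℝ) : EReal) ≤ legendre φ y := fun i => by
    simpa [real_inner_smul_left, mul_comm _ r, mul_assoc, sign_mul_self]
      using coe_sub_le_legendre (haxes i (SignType.sign ⟪b i, y⟫)) y
  rw [EReal.coe_strictMono.monotone.map_max]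
  refine max_le hc_le ?_
  set m := ⨆ i, |⟪b i, y⟫|
  have hnorm : r / (√(Fintype.card ι) + 1) * ‖y‖ ≤ r * m := by
    have hy : ‖y‖ ≤ √(Fintype.card ι) * m := by
      simpa only [Real.norm_eq_abs] using b.norm_le_card_mul_iSup_norm_inner y
    have hm : 0 ≤ m := Real.iSup_nonneg fun i => abs_nonneg _
    rw [div_mul_eq_mul_div, div_le_iff₀ (by positivity)]
    nlinarith [mul_le_mul_of_nonneg_left hy hr, mul_nonneg hr hm]
  rcases isEmpty_or_nonempty ι with hι | hι
  · refine le_trans (EReal.coe_le_coe_iff.2 ?_) hc_le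
    rw [show m = 0 from Real.iSup_of_isEmpty _] at hnorm
    linarith
  · obtain ⟨i, hi⟩ := exists_eq_ciSup_of_finite (f := fun i => |⟪b i, y⟫|)
    refine le_trans (EReal.coe_le_coe_iff.2 ?_) (haxis i)
    rw [hi]
    linarith

lemma lintegral_negPow_one_add_norm_ne_top {δ s : ℝ} (hδ : 0 < δ) (hs : n < s) :
    ∫⁻ y : En n, negPow ((δ * (1 + ‖y‖) : ℝ)) s ≠ ⊤ := by
  have hint : Integrable fun y : En n => δ ^ (-s) * (1 + ‖y‖) ^ (-s) :=
    (integrable_one_add_norm (by simpa using hs)).const_mul _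
  refine (lt_of_eq_of_lt (lintegral_congr fun y => ?_) hint.lintegral_lt_top).ne
  rw [negPow_coe (by positivity), Real.mul_rpow hδ.le (by positivity)]

lemma eventually_le_legendre {K : Set (En n)} (hKopen : IsOpen K) (h0K : (0 : En n) ∈ K)
    {ψ : En n → EReal} (hψ0 : ψ 0 < 0) (hdom : K ⊆ {x | ψ x < ⊤}) {ψs : ℕ → En n → EReal}
    (hptwise : ∀ x ∈ K, Tendsto (fun ℓ => ψs ℓ x) atTop (𝓝 (ψ x))) :
    ∃ δ > 0, ∀ᶠ ℓ in atTop, ∀ y, ((δ * (1 + ‖y‖) : ℝ) : EReal) ≤ legendre (ψs ℓ) y := by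
  obtain ⟨r, hr, hrK⟩ := Metric.nhds_basis_closedBall.mem_iff.1 (hKopen.mem_nhds h0K)
  set b := EuclideanSpace.basisFun (Fin n) ℝ
  set P : Fin n × SignType → En n := fun q => ((q.2 : ℝ) * r) • b q.1
  have hPK : ∀ q, P q ∈ K := fun q => hrK <| by
    rcases q with ⟨i, σ⟩
    rcases σ with _ | _ | _ <;> simp [P, b, norm_smul, abs_of_pos hr, hr.le]
  obtain ⟨c, hc, hc0⟩ : ∃ c : ℝ, 0 < c ∧ ψ 0 < ((-c : ℝ) : EReal) := by
    obtain ⟨c, hψc, hc⟩ := EReal.exists_between_coe_real hψ0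
    exact ⟨-c, by simpa using hc, by simpa using hψc⟩
  obtain ⟨M, hM, hPM⟩ : ∃ M : ℝ, 0 ≤ M ∧ ∀ q, ψ (P q) < M := by
    choose m hm using fun q => EReal.exists_between_coe_real (hdom (hPK q))
    obtain ⟨M, hM⟩ := Finite.exists_le m
    exact ⟨max M 0, le_max_right _ _,
      fun q => (hm q).1.trans_le (EReal.coe_le_coe_iff.2 ((hM q).trans (le_max_left _ _)))⟩
  set a := r / (√(Fintype.card (Fin n)) + 1)
  have ha : 0 < a := by positivity
  refine ⟨a * c / (a + c + M), by positivity, ?_⟩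
  have h0ℓ := (hptwise 0 h0K).eventually_lt_const hc0
  have hPℓ : ∀ᶠ ℓ in atTop, ∀ q, ψs ℓ (P q) < M :=
    eventually_all.2 fun q => (hptwise _ (hPK q)).eventually_lt_const (hPM q)
  filter_upwards [h0ℓ, hPℓ] with ℓ h0ℓ hPℓ y
  exact (EReal.coe_le_coe_iff.2 (mul_one_add_le_max ha hc hM ‖y‖)).trans
    (le_legendre_of_le_on_axes b hr.le hc.le hM h0ℓ.le (fun i σ => (hPℓ (i, σ)).le) y)

end Legendre

theorem statement4_general {n : ℕ} (p : ℝ) (hp : 0 < p)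
    (K : Set (En n)) (hKconv : Convex ℝ K) (hKopen : IsOpen K)
    (h0K : (0 : En n) ∈ K) (ψ : En n → EReal) (hconv : EConvexOn ψ) (hψ0 : ψ 0 < 0)
    (hdom₁ : K ⊆ {x | ψ x < ⊤}) (hdom₂ : {x | ψ x < ⊤} ⊆ closure K)
    (ψs : ℕ → En n → EReal)
    (hptwise : ∀ x ∈ K, Tendsto (fun ℓ => ψs ℓ x) atTop (nhds (ψ x))) :
    Ip n p ψ ≤ atTop.liminf (fun ℓ => Ip n p (ψs ℓ)) := by
  have hs : 0 < (n : ℝ) + p := by positivity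
  obtain ⟨δ, hδ, hbound⟩ := eventually_le_legendre hKopen h0K hψ0 hdom₁ hptwise
  have hJ : atTop.limsup (fun ℓ => ∫⁻ y, negPow (legendre (ψs ℓ) y) (n + p))
      ≤ ∫⁻ y, negPow (legendre ψ y) (n + p) :=
    calc atTop.limsup (fun ℓ => ∫⁻ y, negPow (legendre (ψs ℓ) y) (n + p))
        ≤ ∫⁻ y, atTop.limsup fun ℓ => negPow (legendre (ψs ℓ) y) (n + p) :=
          limsup_lintegral_le_of_eventually_le _
            (fun ℓ => (continuous_negPow hs).measurable.comp (measurable_legendre _))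
            (hbound.mono fun ℓ hℓ => ae_of_all _ fun y => antitone_negPow hs (hℓ y))
            (lintegral_negPow_one_add_norm_ne_top hδ (by linarith))
      _ ≤ ∫⁻ y, negPow (legendre ψ y) (n + p) := lintegral_mono fun y =>
          limsup_negPow_le hs (legendre_le_liminf hKconv (hKopen.interior_eq.symm ▸ h0K) hconv
            hψ0.le hdom₁ hdom₂ hptwise y)
  exact ENNReal.rpow_le_liminf_of_limsup_le (div_nonpos_of_nonpos_of_nonneg (by norm_num) hp.le) hJ

theorem statement4 {n : ℕ} (p : ℝ) (hp : 0 < p)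
    (K : Set (En n)) (hKconv : Convex ℝ K) (hKopen : IsOpen K)
    (h0K : (0 : En n) ∈ K) (ψ : En n → EReal) (hconv : EConvexOn ψ) (hψ0 : ψ 0 < 0)
    (hdom₁ : K ⊆ {x | ψ x < ⊤}) (hdom₂ : {x | ψ x < ⊤} ⊆ closure K)
    (ψs : ℕ → En n → EReal) (hs0 : ∀ ℓ, ψs ℓ 0 < 0)
    (hptwise : ∀ x ∈ K, Tendsto (fun ℓ => ψs ℓ x) atTop (nhds (ψ x))) :
    Ip n p ψ ≤ atTop.liminf (fun ℓ => Ip n p (ψs ℓ)) :=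
  statement4_general p hp K hKconv hKopen h0K ψ hconv hψ0 hdom₁ hdom₂ ψs hptwise
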